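/- arXiv:1712.01206 — 2 statements merged into one kernel-verified Lean document; each statement's English description precedes it below -/
import Mathlib

section
/- For all n ≥ 0 and all 0 ≤ k ≤ n+1, the Lebesgue measure of the set {(x,y) ∈ [0,1)² : ∑_{j=0}^{n} r_{j+1}(x)·r_{n+1-j}(y) = n+1-2k} equals 2^{-(n+1)}·C(n+1, k), where r_j(t) = 1 if the j-th binary digit of t is 1 and -1 otherwise. -/
open MeasureTheory Finset

noncomputable section

/-- The dyadic interval `[m·2^{-k}, (m+1)·2^{-k})`. -/
def dyadicI (k m : ℕ) : Set ℝ :=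
  Set.Ico ((m : ℝ) * (2:ℝ)^(-(k:ℤ))) (((m : ℝ) + 1) * (2:ℝ)^(-(k:ℤ)))

/-- The Haar function of the dyadic interval `[m·2^{-k}, (m+1)·2^{-k})`:
`-1` on the left half, `+1` on the right half, `0` outside. -/
def haarI (k m : ℕ) (x : ℝ) : ℝ :=
  if x ∈ Set.Ico ((m : ℝ) * (2:ℝ)^(-(k:ℤ))) (((m : ℝ) + 1/2) * (2:ℝ)^(-(k:ℤ))) then -1
  else if x ∈ Set.Ico (((m : ℝ) + 1/2) * (2:ℝ)^(-(k:ℤ))) (((m : ℝ) + 1) * (2:ℝ)^(-(k:ℤ))) then 1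
  else 0

/-- The Haar function of the dyadic rectangle `[m·2^{-k},(m+1)·2^{-k}) × [m'·2^{-j},(m'+1)·2^{-j})`. -/
def haarR (k m j m' : ℕ) (p : ℝ × ℝ) : ℝ := haarI k m p.1 * haarI j m' p.2

/-- The signed small ball sum `∑_{|R| = 2^{-n}} ε_R h_R`, where the rectangle of the layer `k`
with horizontal index `m` and vertical index `m'` carries the sign `ε k m m'`. -/
def signedSum (n : ℕ) (ε : ℕ → ℕ → ℕ → ℝ) (p : ℝ × ℝ) : ℝ :=
  ∑ k ∈ Finset.range (n+1), ∑ m ∈ Finset.range (2^k), ∑ m' ∈ Finset.range (2^(n-k)),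
    ε k m m' * haarR k m (n-k) m' p

/-- `rad j t = 1` if the `j`-th binary digit `⌊2^j t⌋ mod 2` of `t` is `1`, `-1` otherwise. -/
def rad (j : ℕ) (t : ℝ) : ℝ := if ⌊(2:ℝ)^j * t⌋ % 2 = 1 then 1 else -1

open scoped symmDiff

/-!
On the dyadic square `dyadicI (n+1) m ×ˢ dyadicI (n+1) m'` the digit `r_{j+1}(x)` is the sign of
bit `n - j` of `m` and `r_{n+1-j}(y)` that of bit `j` of `m'`, so the sum equals `n + 1 - 2 d`, where
`d` counts the `j ≤ n` at which these two bits differ. For fixed `m`, sending `m' < 2^(n+1)` to its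
set of mismatch positions is the binary expansion followed by a symmetric difference with a fixed
set, hence a bijection onto the subsets of `{0, …, n}`; so `d = k` for exactly `C(n+1, k)` values
of `m'`, and the level set is a union of `2^(n+1) C(n+1, k)` squares of area `4^-(n+1)`.
-/

lemma mem_dyadicI_iff {N m : ℕ} {x : ℝ} : x ∈ dyadicI N m ↔ ⌊2 ^ N * x⌋ = m := by
  have hpos : (0:ℝ) < 2 ^ N := by positivity
  rw [dyadicI, Set.mem_Ico, Int.floor_eq_iff, zpow_neg, zpow_natCast, ← div_eq_mul_inv,
    ← div_eq_mul_inv, div_le_iff₀ hpos, lt_div_iff₀ hpos]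
  push_cast
  constructor <;> rintro ⟨h1, h2⟩ <;> constructor <;> linarith

lemma mem_Ico_zero_one_iff_exists_dyadicI {N : ℕ} {x : ℝ} :
    x ∈ Set.Ico (0:ℝ) 1 ↔ ∃ m < 2 ^ N, x ∈ dyadicI N m := by
  have hpos : (0:ℝ) < 2 ^ N := by positivity
  simp only [mem_dyadicI_iff, Set.mem_Ico]
  constructor
  · rintro ⟨hx0, hx1⟩
    have hfloor0 : 0 ≤ ⌊(2:ℝ) ^ N * x⌋ := Int.floor_nonneg.2 (by positivity)
    have hfloor1 : ⌊(2:ℝ) ^ N * x⌋ < 2 ^ N := Int.floor_lt.2 (by push_cast; nlinarith)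
    exact ⟨⌊(2:ℝ) ^ N * x⌋.toNat, (Int.toNat_lt' (by positivity)).2 (by exact_mod_cast hfloor1),
      by omega⟩
  · rintro ⟨m, hm, hx⟩
    have hle := Int.floor_le ((2:ℝ) ^ N * x)
    have hlt := Int.lt_floor_add_one ((2:ℝ) ^ N * x)
    have hm' : (m:ℝ) + 1 ≤ 2 ^ N := by exact_mod_cast hm
    rw [hx] at hle hlt
    push_cast at hle hlt
    constructor <;> nlinarith

lemma pairwise_disjoint_dyadicI (N : ℕ) : Pairwise (Function.onFun Disjoint (dyadicI N)) := by
  intro m m' hne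
  refine Set.disjoint_left.2 fun x hx hx' => hne ?_
  rw [mem_dyadicI_iff] at hx hx'
  exact_mod_cast hx.symm.trans hx'

lemma volume_dyadicI (N m : ℕ) : volume (dyadicI N m) = ENNReal.ofReal ((2 ^ N)⁻¹) := by
  rw [dyadicI, Real.volume_Ico, zpow_neg, zpow_natCast]
  ring_nf

lemma rad_of_mem_dyadicI {N m j : ℕ} {x : ℝ} (hj : j ≤ N) (hx : x ∈ dyadicI N m) :
    rad j x = if m.testBit (N - j) then 1 else -1 := by
  have hscale : (2:ℝ) ^ j * x = 2 ^ N * x / ((2 ^ (N - j) : ℕ) : ℝ) := by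
    rw [eq_div_iff (by positivity), Nat.cast_pow, Nat.cast_two, mul_right_comm, ← pow_add,
      Nat.add_sub_cancel' hj]
  have hfloor : ⌊(2:ℝ) ^ j * x⌋ = ((m / 2 ^ (N - j) : ℕ) : ℤ) := by
    rw [hscale, Int.floor_div_natCast, mem_dyadicI_iff.1 hx]
    norm_cast
  rw [rad, hfloor, Nat.testBit_eq_decide_div_mod_eq]
  exact if_congr (by rw [decide_eq_true_iff]; omega) rfl rfl

lemma sum_ite_neg_one_one {ι : Type*} (s : Finset ι) (p : ι → Prop) [DecidablePred p] :
    ∑ i ∈ s, (if p i then (-1:ℝ) else 1) = #s - 2 * #{i ∈ s | p i} := by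
  rw [sum_ite, sum_const, sum_const, ← card_filter_add_card_filter_not (s := s) p]
  simp only [nsmul_eq_mul, Nat.cast_add]
  ring

lemma sum_rad_mul_rad_of_mem_dyadicI {n m m' : ℕ} {x y : ℝ}
    (hx : x ∈ dyadicI (n + 1) m) (hy : y ∈ dyadicI (n + 1) m') :
    ∑ j ∈ range (n + 1), rad (j + 1) x * rad (n + 1 - j) y
      = n + 1 - 2 * #{j ∈ range (n + 1) | m'.testBit j ≠ m.testBit (n - j)} := by
  have hterm : ∀ j ∈ range (n + 1), rad (j + 1) x * rad (n + 1 - j) y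
      = if m'.testBit j ≠ m.testBit (n - j) then -1 else 1 := by
    intro j hj
    have hj : j ≤ n := Nat.lt_succ_iff.1 (mem_range.1 hj)
    rw [rad_of_mem_dyadicI (by omega) hx, rad_of_mem_dyadicI (by omega) hy,
      show n + 1 - (j + 1) = n - j by omega, show n + 1 - (n + 1 - j) = j by omega]
    cases m.testBit (n - j) <;> cases m'.testBit j <;> norm_num
  rw [sum_congr rfl hterm, sum_ite_neg_one_one, card_range]
  push_cast
  ring

lemma card_filter_card_symmDiff {α : Type*} [DecidableEq α] {U B : Finset α} (hB : B ⊆ U)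
    (k : ℕ) : #{s ∈ U.powerset | #(s ∆ B) = k} = (#U).choose k := by
  rw [← card_powersetCard, powersetCard_eq_filter]
  have hmaps : ∀ s ⊆ U, s ∆ B ⊆ U := fun s hs =>
    symmDiff_subset_union.trans (union_subset hs hB)
  refine card_nbij' (· ∆ B) (· ∆ B) ?_ ?_ ?_ ?_ <;> intro s hs <;>
    simp only [coe_filter, mem_powerset, Set.mem_ofPred_eq] at hs ⊢
  · exact ⟨hmaps s hs.1, hs.2⟩
  · exact ⟨hmaps s hs.1, by rw [symmDiff_symmDiff_cancel_right]; exact hs.2⟩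
  · exact symmDiff_symmDiff_cancel_right B s
  · exact symmDiff_symmDiff_cancel_right B s

lemma filter_testBit_eq_bitIndices {N m : ℕ} (hm : m < 2 ^ N) :
    {i ∈ range N | m.testBit i} = m.bitIndices.toFinset := by
  ext i
  rw [mem_filter, mem_range, List.mem_toFinset, Nat.mem_bitIndices]
  exact ⟨And.right, fun hi =>
    ⟨(Nat.pow_lt_pow_iff_right one_lt_two).1 ((Nat.ge_two_pow_of_testBit hi).trans_lt hm), hi⟩⟩

lemma filter_testBit_sum_two_pow {N : ℕ} {s : Finset ℕ} (hs : s ⊆ range N) :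
    {i ∈ range N | (∑ j ∈ s, 2 ^ j).testBit i} = s := by
  ext i
  rw [mem_filter, ← Nat.mem_bitIndices, ← List.mem_toFinset, toFinset_bitIndices_sum_two_pow]
  exact ⟨And.right, fun hi => ⟨hs hi, hi⟩⟩

lemma card_filter_range_two_pow {N : ℕ} (P : Finset ℕ → Prop) [DecidablePred P] :
    #{m ∈ range (2 ^ N) | P {i ∈ range N | m.testBit i}} = #{s ∈ (range N).powerset | P s} := by
  refine card_nbij' (fun m => {i ∈ range N | m.testBit i}) (fun s => ∑ i ∈ s, 2 ^ i)
    ?_ ?_ ?_ ?_ <;> intro s hs <;> simp only [coe_filter, mem_powerset, mem_range, Set.mem_ofPred_eq] at hs ⊢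
  · exact ⟨filter_subset _ _, hs.2⟩
  · refine ⟨Nat.geomSum_lt le_rfl fun i hi => mem_range.1 (hs.1 hi), ?_⟩
    rw [filter_testBit_sum_two_pow hs.1]
    exact hs.2
  · rw [filter_testBit_eq_bitIndices hs.1, sum_toFinset_bitIndices_two_pow]
  · exact filter_testBit_sum_two_pow hs.1

lemma card_filter_card_testBit_ne (N k : ℕ) (b : ℕ → Bool) :
    #{m ∈ range (2 ^ N) | #{i ∈ range N | m.testBit i ≠ b i} = k} = N.choose k := by
  have hmismatch : ∀ m : ℕ, {i ∈ range N | m.testBit i ≠ b i}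
      = {i ∈ range N | m.testBit i} ∆ {i ∈ range N | b i} := by
    intro m
    ext i
    simp only [mem_filter, mem_symmDiff]
    cases m.testBit i <;> cases b i <;> tauto
  simp only [hmismatch]
  rw [card_filter_range_two_pow (fun s => #(s ∆ {i ∈ range N | b i}) = k),
    card_filter_card_symmDiff (filter_subset _ _), card_range]

lemma volume_biUnion_dyadicI_prod (N : ℕ) (S : Finset (ℕ × ℕ)) :
    volume (⋃ q ∈ S, dyadicI N q.1 ×ˢ dyadicI N q.2) = ENNReal.ofReal (#S / 4 ^ N) := by
  rw [measure_biUnion_finset]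
  · simp only [Measure.volume_eq_prod, Measure.prod_prod, volume_dyadicI]
    rw [sum_const, nsmul_eq_mul, ← ENNReal.ofReal_mul (by positivity),
      ← ENNReal.ofReal_natCast, ← ENNReal.ofReal_mul (by positivity), ← mul_inv, ← mul_pow]
    norm_num [div_eq_mul_inv]
  · intro q _ q' _ hne
    exact Set.disjoint_prod.2 <| (not_and_or.1 (mt Prod.ext_iff.2 hne)).imp
      (pairwise_disjoint_dyadicI N ·) (pairwise_disjoint_dyadicI N ·)
  · intro q _
    exact measurableSet_Ico.prod measurableSet_Ico

lemma setOf_mem_unitSquare_eq_biUnion {N : ℕ} {P : ℝ × ℝ → Prop} {Q : ℕ × ℕ → Prop}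
    [DecidablePred Q] (hPQ : ∀ q : ℕ × ℕ, ∀ p ∈ dyadicI N q.1 ×ˢ dyadicI N q.2, P p ↔ Q q) :
    {p : ℝ × ℝ | p.1 ∈ Set.Ico (0:ℝ) 1 ∧ p.2 ∈ Set.Ico (0:ℝ) 1 ∧ P p}
      = ⋃ q ∈ {q ∈ range (2 ^ N) ×ˢ range (2 ^ N) | Q q}, dyadicI N q.1 ×ˢ dyadicI N q.2 := by
  ext p
  simp only [Set.mem_ofPred_eq, Set.mem_iUnion, mem_filter, mem_product, mem_range, exists_prop,
    mem_Ico_zero_one_iff_exists_dyadicI (N := N)]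
  constructor
  · rintro ⟨⟨m, hm, hx⟩, ⟨m', hm', hy⟩, hP⟩
    exact ⟨(m, m'), ⟨⟨hm, hm'⟩, (hPQ (m, m') p ⟨hx, hy⟩).1 hP⟩, hx, hy⟩
  · rintro ⟨q, ⟨⟨hm, hm'⟩, hQ⟩, hp⟩
    exact ⟨⟨q.1, hm, hp.1⟩, ⟨q.2, hm', hp.2⟩, (hPQ q p hp).2 hQ⟩

lemma card_filter_product_range_two_pow (n k : ℕ) :
    #{q ∈ range (2 ^ (n + 1)) ×ˢ range (2 ^ (n + 1)) |
        #{j ∈ range (n + 1) | q.2.testBit j ≠ q.1.testBit (n - j)} = k}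
      = 2 ^ (n + 1) * (n + 1).choose k := by
  rw [card_filter, sum_product]
  simp only [← card_filter, card_filter_card_testBit_ne, sum_const, card_range, smul_eq_mul]

theorem rad_sum_level_sets_general (n k : ℕ) :
    volume {p : ℝ × ℝ | p.1 ∈ Set.Ico (0:ℝ) 1 ∧ p.2 ∈ Set.Ico (0:ℝ) 1 ∧
        ∑ j ∈ Finset.range (n+1), rad (j+1) p.1 * rad (n+1-j) p.2 = (n : ℝ) + 1 - 2 * k}
      = ENNReal.ofReal (((n+1).choose k : ℝ) / 2^(n+1)) := by
  rw [setOf_mem_unitSquare_eq_biUnion (N := n + 1)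
      (Q := fun q => #{j ∈ range (n + 1) | q.2.testBit j ≠ q.1.testBit (n - j)} = k),
    volume_biUnion_dyadicI_prod, card_filter_product_range_two_pow]
  · rw [show (4:ℝ) ^ (n + 1) = 2 ^ (n + 1) * 2 ^ (n + 1) by rw [← mul_pow]; norm_num]
    push_cast
    rw [mul_div_mul_left _ _ (by positivity)]
  · rintro ⟨m, m'⟩ ⟨x, y⟩ ⟨hx, hy⟩
    rw [sum_rad_mul_rad_of_mem_dyadicI hx hy, sub_right_inj, mul_right_inj' two_ne_zero,
      Nat.cast_inj]

/-- Level sets of `∑_{j=0}^n r_{j+1}(x) r_{n+1-j}(y)` follow the binomial distribution. -/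
theorem rad_sum_level_sets (n k : ℕ) (hk : k ≤ n + 1) :
    volume {p : ℝ × ℝ | p.1 ∈ Set.Ico (0:ℝ) 1 ∧ p.2 ∈ Set.Ico (0:ℝ) 1 ∧
        ∑ j ∈ Finset.range (n+1), rad (j+1) p.1 * rad (n+1-j) p.2 = (n : ℝ) + 1 - 2 * k}
      = ENNReal.ofReal (((n+1).choose k : ℝ) / 2^(n+1)) :=
  rad_sum_level_sets_general n k
end
end

section
/- For any n ≥ 0 and any signs ε_R ∈ {-1,1}, the supremum of |∑_{|R|=2^{-n}} ε_R h_R| over [0,1)² is exactly n+1, and this value is attained on a set of positive measure. -/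
open MeasureTheory Finset

noncomputable section

/-! At a point, exactly one rectangle of each of the `n + 1` layers can carry a nonzero Haar
function, and there it is `±1`; this gives `|∑ ε_R h_R| ≤ n + 1`. For equality, take `x` in
`[0, 2^{-(n+1)})`, where all Haar functions of the `x`-intervals are `-1`, and choose the binary
digits of `y` from the most significant one down: the digit of level `n - k` puts `y` in the half
of its interval where the Haar function equals `-ε_R` for the rectangle `R` of layer `k` through
`(x, y)`, which is already determined by the previous digits. Then every term equals `1` on a whole
dyadic square of side `2^{-(n+1)}`. -/

lemma mem_Ico_div_iff_floor_eq {r x : ℝ} (hr : 0 < r) (a : ℕ) :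
    x ∈ Set.Ico (a / r) ((a + 1) / r) ↔ ⌊r * x⌋ = a := by
  rw [Int.floor_eq_iff, Set.mem_Ico, div_le_iff₀ hr, lt_div_iff₀ hr, mul_comm x]
  push_cast
  rfl

lemma haarI_eq_ite (k m : ℕ) (x : ℝ) :
    haarI k m x = if ⌊2 ^ (k + 1) * x⌋ = 2 * m then -1
      else if ⌊2 ^ (k + 1) * x⌋ = 2 * m + 1 then 1 else 0 := by
  have hr : (0 : ℝ) < 2 ^ (k + 1) := by positivity
  have hscale : ∀ a : ℝ, a * 2 ^ (-(k : ℤ)) = 2 * a / 2 ^ (k + 1) := by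
    intro a
    rw [zpow_neg, zpow_natCast, pow_succ]
    field_simp
  have hleft :
      x ∈ Set.Ico ((m : ℝ) * 2 ^ (-(k : ℤ))) (((m : ℝ) + 1 / 2) * 2 ^ (-(k : ℤ))) ↔
      ⌊2 ^ (k + 1) * x⌋ = 2 * m := by
    rw [hscale, hscale]
    convert mem_Ico_div_iff_floor_eq hr (2 * m) using 3 <;> push_cast <;> ring_nf
  have hright :
      x ∈ Set.Ico (((m : ℝ) + 1 / 2) * 2 ^ (-(k : ℤ))) (((m : ℝ) + 1) * 2 ^ (-(k : ℤ))) ↔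
      ⌊2 ^ (k + 1) * x⌋ = 2 * m + 1 := by
    rw [hscale, hscale]
    convert mem_Ico_div_iff_floor_eq hr (2 * m + 1) using 3 <;> push_cast <;> ring_nf
  simp only [haarI, hleft, hright]

lemma haarI_eq_neg_one {k m : ℕ} {x : ℝ} (h : ⌊2 ^ (k + 1) * x⌋ = 2 * m) :
    haarI k m x = -1 := by
  rw [haarI_eq_ite, if_pos h]

lemma haarI_eq_one {k m : ℕ} {x : ℝ} (h : ⌊2 ^ (k + 1) * x⌋ = 2 * m + 1) :
    haarI k m x = 1 := by
  rw [haarI_eq_ite, if_neg (by omega), if_pos h]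

lemma abs_haarI_le_one (k m : ℕ) (x : ℝ) : |haarI k m x| ≤ 1 := by
  rw [haarI_eq_ite]
  split_ifs <;> norm_num

lemma natCast_eq_floor_div_two_of_haarI_ne_zero {k m : ℕ} {x : ℝ} (h : haarI k m x ≠ 0) :
    (m : ℤ) = ⌊2 ^ (k + 1) * x⌋ / 2 := by
  rw [haarI_eq_ite] at h
  split_ifs at h with hleft hright
  · omega
  · omega
  · exact absurd rfl h

lemma eq_of_haarI_ne_zero {k m m' : ℕ} {x : ℝ} (h : haarI k m x ≠ 0) (h' : haarI k m' x ≠ 0) :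
    m = m' := by
  have := natCast_eq_floor_div_two_of_haarI_ne_zero h
  have := natCast_eq_floor_div_two_of_haarI_ne_zero h'
  omega

lemma sum_mul_haarI_eq_single {s : Finset ℕ} {k M : ℕ} {x : ℝ} (hM : M ∈ s)
    (hx : ∀ m, haarI k m x ≠ 0 → m = M) (f : ℕ → ℝ) :
    ∑ m ∈ s, f m * haarI k m x = f M * haarI k M x :=
  sum_eq_single_of_mem M hM fun m _ hm => by rw [not_not.mp (mt (hx m) hm), mul_zero]

lemma abs_sum_mul_haarI_le_one (s : Finset ℕ) (k : ℕ) (x : ℝ) {f : ℕ → ℝ}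
    (hf : ∀ m, |f m| ≤ 1) : |∑ m ∈ s, f m * haarI k m x| ≤ 1 := by
  by_cases h : ∃ M ∈ s, haarI k M x ≠ 0
  · obtain ⟨M, hM, hMx⟩ := h
    rw [sum_mul_haarI_eq_single hM (fun m hm => eq_of_haarI_ne_zero hm hMx), abs_mul]
    exact mul_le_one₀ (hf M) (abs_nonneg _) (abs_haarI_le_one k M x)
  · push Not at h
    rw [sum_eq_zero fun m hm => by rw [h m hm, mul_zero], abs_zero]
    exact zero_le_one

lemma sum_sum_mul_haarR (s t : Finset ℕ) (c : ℕ → ℕ → ℝ) (k j : ℕ) (p : ℝ × ℝ) :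
    ∑ m ∈ s, ∑ m' ∈ t, c m m' * haarR k m j m' p =
      ∑ m ∈ s, (∑ m' ∈ t, c m m' * haarI j m' p.2) * haarI k m p.1 := by
  refine sum_congr rfl fun m _ => ?_
  rw [sum_mul]
  exact sum_congr rfl fun m' _ => by rw [haarR]; ring

theorem abs_signedSum_le (n : ℕ) {ε : ℕ → ℕ → ℕ → ℝ} (hε : ∀ k m m', |ε k m m'| ≤ 1)
    (p : ℝ × ℝ) : |signedSum n ε p| ≤ n + 1 :=
  calc |signedSum n ε p|
      ≤ ∑ k ∈ range (n + 1),
          |∑ m ∈ range (2 ^ k), ∑ m' ∈ range (2 ^ (n - k)), ε k m m' * haarR k m (n - k) m' p| :=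
        abs_sum_le_sum_abs _ _
    _ ≤ ∑ _k ∈ range (n + 1), (1 : ℝ) := by
        gcongr with k
        rw [sum_sum_mul_haarR]
        exact abs_sum_mul_haarI_le_one _ _ _ fun m => abs_sum_mul_haarI_le_one _ _ _ (hε k m)
    _ = n + 1 := by simp

lemma signedSum_eq_sum_of_haarI_support (n : ℕ) (ε : ℕ → ℕ → ℕ → ℝ) {p : ℝ × ℝ}
    {Mx My : ℕ → ℕ}
    (hMx : ∀ k ≤ n, Mx k < 2 ^ k) (hMy : ∀ k ≤ n, My k < 2 ^ (n - k))
    (hx : ∀ k ≤ n, ∀ m, haarI k m p.1 ≠ 0 → m = Mx k)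
    (hy : ∀ k ≤ n, ∀ m, haarI (n - k) m p.2 ≠ 0 → m = My k) :
    signedSum n ε p =
      ∑ k ∈ range (n + 1), ε k (Mx k) (My k) * haarR k (Mx k) (n - k) (My k) p := by
  refine sum_congr rfl fun k hk => ?_
  have hkn : k ≤ n := Nat.lt_succ_iff.mp (mem_range.mp hk)
  rw [sum_sum_mul_haarR, sum_mul_haarI_eq_single (mem_range.mpr (hMx k hkn)) (hx k hkn),
    sum_mul_haarI_eq_single (mem_range.mpr (hMy k hkn)) (hy k hkn), haarR]
  ring

lemma floor_two_pow_mul_eq_div {y : ℝ} {i k A : ℕ} (h : ⌊2 ^ (i + k) * y⌋ = A) :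
    ⌊2 ^ i * y⌋ = (A / 2 ^ k : ℕ) := by
  have hy : (2 : ℝ) ^ i * y = 2 ^ (i + k) * y / ((2 ^ k : ℕ) : ℝ) := by
    push_cast
    rw [pow_add]
    field_simp
  rw [hy, Int.floor_div_natCast, h]
  push_cast
  rfl

lemma Nat.exists_lt_two_pow_digit_eq_zero_iff (p : ℕ → ℕ → Prop) (N : ℕ) :
    ∃ A < 2 ^ N, ∀ k < N, (A / 2 ^ k % 2 = 0 ↔ p k (A / 2 ^ (k + 1))) := by
  classical
  induction N generalizing p with
  | zero => exact ⟨0, by simp, by simp⟩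
  | succ N ih =>
    obtain ⟨A, hA, hdigits⟩ := ih (fun k => p (k + 1))
    set b := if p 0 A then 0 else 1 with hb
    have hshift : ∀ j, (2 * A + b) / 2 ^ (j + 1) = A / 2 ^ j := by
      intro j
      rw [pow_succ', ← Nat.div_div_eq_div_mul]
      congr 1
      split_ifs at hb <;> omega
    refine ⟨2 * A + b, by split_ifs at hb <;> rw [pow_succ] <;> omega, fun k hk => ?_⟩
    rcases k with _ | k
    · rw [hshift, pow_zero, Nat.div_one]
      split_ifs at hb with h0 <;> simp [hb, h0]
    · rw [hshift, hshift]
      exact hdigits k (by omega)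

lemma haarI_eq_neg_of_floor_eq {j q d : ℕ} {y s : ℝ} (hs : s = 1 ∨ s = -1) (hd : d < 2)
    (hds : d = 0 ↔ s = 1) (h : ⌊2 ^ (j + 1) * y⌋ = 2 * q + d) : haarI j q y = -s := by
  rcases hs with rfl | rfl
  · exact haarI_eq_neg_one (by rw [h, hds.mpr rfl]; simp)
  · have hd1 : d = 1 := by
      have := mt hds.mp (by norm_num)
      omega
    rw [haarI_eq_one (by rw [h, hd1]; simp), neg_neg]

theorem exists_signedSum_eq_on_dyadic_square {n : ℕ} {ε : ℕ → ℕ → ℕ → ℝ}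
    (hε : ∀ k m m', ε k m m' = 1 ∨ ε k m m' = -1) :
    ∃ A : ℕ, A < 2 ^ (n + 1) ∧ ∀ x y : ℝ, ⌊2 ^ (n + 1) * x⌋ = 0 → ⌊2 ^ (n + 1) * y⌋ = A →
      signedSum n ε (x, y) = n + 1 := by
  obtain ⟨A, hA, hdigits⟩ :=
    Nat.exists_lt_two_pow_digit_eq_zero_iff (fun k q => ε k 0 q = 1) (n + 1)
  refine ⟨A, hA, fun x y hx hy => ?_⟩
  have hxk : ∀ k ≤ n, ⌊2 ^ (k + 1) * x⌋ = 2 * ((0 : ℕ) : ℤ) := fun k hk => by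
    simpa using floor_two_pow_mul_eq_div (k := n - k) (A := 0)
      (by rw [show k + 1 + (n - k) = n + 1 by omega]; exact_mod_cast hx)
  have hdiv : ∀ k, A / 2 ^ k = 2 * (A / 2 ^ (k + 1)) + A / 2 ^ k % 2 := fun k => by
    rw [pow_succ, ← Nat.div_div_eq_div_mul]
    omega
  have hyk : ∀ k ≤ n, ⌊2 ^ (n - k + 1) * y⌋ =
      2 * ((A / 2 ^ (k + 1) : ℕ) : ℤ) + ((A / 2 ^ k % 2 : ℕ) : ℤ) := fun k hk => by
    rw [floor_two_pow_mul_eq_div (by rwa [show n - k + 1 + k = n + 1 by omega])]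
    exact_mod_cast hdiv k
  rw [signedSum_eq_sum_of_haarI_support n ε (Mx := fun _ => 0)
    (My := fun k => A / 2 ^ (k + 1)) (fun k _ => Nat.two_pow_pos k) (fun k hk => ?_)
    (fun k hk m hm => ?_) (fun k hk m hm => ?_)]
  · have hterm : ∀ k ∈ range (n + 1),
        ε k 0 (A / 2 ^ (k + 1)) * haarR k 0 (n - k) (A / 2 ^ (k + 1)) (x, y) = 1 := by
      intro k hk
      have hkn : k ≤ n := Nat.lt_succ_iff.mp (mem_range.mp hk)
      rw [haarR, haarI_eq_neg_one (hxk k hkn), haarI_eq_neg_of_floor_eq (hε k 0 _)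
        (Nat.mod_lt _ two_pos) (hdigits k (by omega)) (hyk k hkn)]
      rcases hε k 0 (A / 2 ^ (k + 1)) with h | h <;> rw [h] <;> norm_num
    rw [sum_congr rfl hterm]
    simp
  · rw [Nat.div_lt_iff_lt_mul (Nat.two_pow_pos _), ← pow_add,
      show n - k + (k + 1) = n + 1 by omega]
    exact hA
  · have := (natCast_eq_floor_div_two_of_haarI_ne_zero hm).trans (by rw [hxk k hk])
    omega
  · have := (natCast_eq_floor_div_two_of_haarI_ne_zero hm).trans (by rw [hyk k hk])
    have := Nat.mod_lt (A / 2 ^ k) two_pos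
    omega

lemma Ico_div_subset_Ico_zero_one {a : ℕ} {r : ℝ} (h : (a : ℝ) + 1 ≤ r) :
    Set.Ico (a / r) ((a + 1) / r) ⊆ Set.Ico 0 1 := by
  have hr : 0 < r := by linarith [a.cast_nonneg (α := ℝ)]
  exact Set.Ico_subset_Ico (by positivity) ((div_le_one hr).mpr h)

/-- Sharp form of the two-dimensional signed small ball inequality: `|signedSum| ≤ n+1`
everywhere on the unit square, and the value `n+1` is attained on a set of positive measure. -/
theorem sup_eq_n_add_one (n : ℕ) (ε : ℕ → ℕ → ℕ → ℝ)
    (hε : ∀ j m m', ε j m m' = 1 ∨ ε j m m' = -1) :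
    (∀ p ∈ (Set.Ico (0:ℝ) 1) ×ˢ (Set.Ico (0:ℝ) 1), |signedSum n ε p| ≤ (n : ℝ) + 1) ∧
    0 < volume {p : ℝ × ℝ | p.1 ∈ Set.Ico (0:ℝ) 1 ∧ p.2 ∈ Set.Ico (0:ℝ) 1 ∧
        signedSum n ε p = (n : ℝ) + 1} := by
  have habs : ∀ k m m', |ε k m m'| ≤ 1 := fun k m m' => by
    rcases hε k m m' with h | h <;> simp [h]
  refine ⟨fun p _ => abs_signedSum_le n habs p, ?_⟩
  obtain ⟨A, hA, hvalue⟩ := exists_signedSum_eq_on_dyadic_square hε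
  have hr : (0 : ℝ) < 2 ^ (n + 1) := by positivity
  have hA' : (A : ℝ) + 1 ≤ 2 ^ (n + 1) := by exact_mod_cast hA
  have hsquare : Set.Ico (((0 : ℕ) : ℝ) / 2 ^ (n + 1)) ((((0 : ℕ) : ℝ) + 1) / 2 ^ (n + 1)) ×ˢ
      Set.Ico ((A : ℝ) / 2 ^ (n + 1)) (((A : ℝ) + 1) / 2 ^ (n + 1)) ⊆
      {p : ℝ × ℝ | p.1 ∈ Set.Ico (0:ℝ) 1 ∧ p.2 ∈ Set.Ico (0:ℝ) 1 ∧
        signedSum n ε p = (n : ℝ) + 1} := by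
    rintro ⟨x, y⟩ ⟨hx, hy⟩
    refine ⟨Ico_div_subset_Ico_zero_one (by simpa using one_le_pow₀ one_le_two) hx,
      Ico_div_subset_Ico_zero_one hA' hy, hvalue x y ?_ ((mem_Ico_div_iff_floor_eq hr A).mp hy)⟩
    exact_mod_cast (mem_Ico_div_iff_floor_eq hr 0).mp hx
  refine lt_of_lt_of_le ?_ (measure_mono hsquare)
  rw [Measure.volume_eq_prod, Measure.prod_prod, Real.volume_Ico, Real.volume_Ico]
  simp [hr, div_lt_div_iff_of_pos_right hr]
end
end
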